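/- arXiv:1803.06846 — 4 statements merged into one kernel-verified Lean document; each statement's English description precedes it below -/
import Mathlib

section
/- Let B be the closed ball of radius 1 in ℝ^d centered at the origin, and let ρ > 1. For every degree bound l, there exists a constant C > 0 (depending only on d, l, ρ) such that for every polynomial q of degree at most l and every closed ball B' ⊆ B of radius at least 1/ρ, one has sup_{x ∈ B} |q(x)| ≤ C · (∫_{B'} |q|² )^{1/2}. -/
/-!
For a fixed ball `B₀` of positive radius, `q ↦ q|_{B₀}` is injective from polynomials of degree
`≤ l` into `L²(B₀)`, since a polynomial vanishing on an open set is zero. On this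
finite-dimensional space every linear map is bounded with respect to any injective one, so the
sup norm on the unit ball is dominated by the `L²(B₀)` norm. Uniformity in the inscribed ball
comes from compactness: the centres of admissible balls `B' = closedBall c r` lie in the unit ball,
which is covered by finitely many balls `ball c₀ (1/(2ρ))`, and then `closedBall c₀ (1/(2ρ)) ⊆ B'`.
-/

open MeasureTheory Metric MvPolynomial

theorem LinearMap.exists_norm_le_mul_norm_of_injective {𝕜 V F G : Type*}
    [NontriviallyNormedField 𝕜] [CompleteSpace 𝕜]
    [AddCommGroup V] [Module 𝕜 V] [FiniteDimensional 𝕜 V]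
    [NormedAddCommGroup F] [NormedSpace 𝕜 F] [NormedAddCommGroup G] [NormedSpace 𝕜 G]
    (f : V →ₗ[𝕜] F) {g : V →ₗ[𝕜] G} (hg : Function.Injective g) :
    ∃ C > 0, ∀ v, ‖f v‖ ≤ C * ‖g v‖ := by
  let e := LinearEquiv.ofInjective g hg
  let h : LinearMap.range g →L[𝕜] F :=
    ⟨f ∘ₗ e.symm.toLinearMap, LinearMap.continuous_of_finiteDimensional _⟩
  refine ⟨‖h‖ + 1, by positivity, fun v => ?_⟩
  calc ‖f v‖ = ‖h (e v)‖ := by simp [h]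
    _ ≤ ‖h‖ * ‖g v‖ := h.le_opNorm (e v)
    _ ≤ (‖h‖ + 1) * ‖g v‖ := by gcongr; linarith

section L2OnCompact

variable {X : Type*} [TopologicalSpace X] [MeasurableSpace X] [OpensMeasurableSpace X] [T2Space X]
  (μ : Measure X) [IsFiniteMeasureOnCompacts μ] {K : Set X} (hK : IsCompact K)

include hK in
theorem ContinuousMap.memLp_two_restrict (f : C(X, ℝ)) : MemLp f 2 (μ.restrict K) :=
  (memLp_two_iff_integrable_sq f.continuous.aestronglyMeasurable).2 <|
    (f.continuous.pow 2).continuousOn.integrableOn_compact hK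

noncomputable def ContinuousMap.toL2On : C(X, ℝ) →ₗ[ℝ] Lp ℝ 2 (μ.restrict K) where
  toFun f := (f.memLp_two_restrict μ hK).toLp f
  map_add' _ _ := MemLp.toLp_add _ _
  map_smul' c _ := MemLp.toLp_const_smul c _

theorem ContinuousMap.norm_toL2On (f : C(X, ℝ)) :
    ‖f.toL2On μ hK‖ = (∫ x in K, f x ^ 2 ∂μ) ^ (1 / 2 : ℝ) := by
  rw [toL2On, LinearMap.coe_mk, AddHom.coe_mk, Lp.norm_toLp,
    (f.memLp_two_restrict μ hK).eLpNorm_eq_integral_rpow_norm two_ne_zero ENNReal.ofNat_ne_top,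
    ENNReal.toReal_ofReal (by positivity)]
  simp

theorem ContinuousMap.eqOn_interior_of_toL2On_eq_zero [μ.IsOpenPosMeasure] {f : C(X, ℝ)}
    (hf : f.toL2On μ hK = 0) : Set.EqOn f 0 (interior K) := by
  have hae : f =ᵐ[μ.restrict K] 0 := by
    rw [Lp.eq_zero_iff_ae_eq_zero] at hf
    exact (f.memLp_two_restrict μ hK).coeFn_toLp.symm.trans hf
  exact Measure.eqOn_open_of_ae_eq (ae_restrict_of_ae_restrict_of_subset interior_subset hae)
    isOpen_interior f.continuous.continuousOn continuousOn_const

end L2OnCompact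

namespace MvPolynomial

variable {d : ℕ}

theorem analyticOnNhd_eval_euclidean (q : MvPolynomial (Fin d) ℝ) :
    AnalyticOnNhd ℝ (fun x : EuclideanSpace ℝ (Fin d) => eval (fun i => x i) q) Set.univ :=
  AnalyticOnNhd.eval_continuousLinearMap'
    (fun i => (EuclideanSpace.proj i : EuclideanSpace ℝ (Fin d) →L[ℝ] ℝ)) q

theorem eq_zero_of_eqOn_zero_of_isOpen {q : MvPolynomial (Fin d) ℝ}
    {U : Set (EuclideanSpace ℝ (Fin d))} (hU : IsOpen U) (hUne : U.Nonempty)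
    (hq : Set.EqOn (fun x : EuclideanSpace ℝ (Fin d) => eval (fun i => x i) q) 0 U) : q = 0 := by
  obtain ⟨x₀, hx₀⟩ := hUne
  have hzero := (analyticOnNhd_eval_euclidean q).eqOn_zero_of_preconnected_of_eventuallyEq_zero
    isPreconnected_univ (Set.mem_univ x₀) (Filter.eventuallyEq_of_mem (hU.mem_nhds hx₀) hq)
  exact MvPolynomial.funext fun x => by
    simpa using hzero (Set.mem_univ ((EuclideanSpace.equiv (Fin d) ℝ).symm x))

noncomputable def toContinuousMapEuclidean :
    MvPolynomial (Fin d) ℝ →ₗ[ℝ] C(EuclideanSpace ℝ (Fin d), ℝ) where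
  toFun q := ⟨fun x => eval (fun i => x i) q, (analyticOnNhd_eval_euclidean q).continuous⟩
  map_add' _ _ := by ext; simp
  map_smul' _ _ := by ext; simp

theorem exists_abs_eval_le_mul_integral_sq (l : ℕ) {K S : Set (EuclideanSpace ℝ (Fin d))}
    (hK : IsCompact K) (hS : IsCompact S) (hS' : (interior S).Nonempty) :
    ∃ C > 0, ∀ q : MvPolynomial (Fin d) ℝ, q.totalDegree ≤ l → ∀ x ∈ K,
      |eval (fun i => x i) q| ≤ C * (∫ y in S, eval (fun i => y i) q ^ 2) ^ (1 / 2 : ℝ) := by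
  have : CompactSpace K := isCompact_iff_compactSpace.mp hK
  let P := toContinuousMapEuclidean ∘ₗ (restrictTotalDegree (Fin d) ℝ l).subtype
  let f :=
    (ContinuousMap.compRightAlgHom ℝ ℝ ⟨((↑) : K → _), continuous_subtype_val⟩).toLinearMap ∘ₗ P
  let g := ContinuousMap.toL2On volume hS ∘ₗ P
  have hg : Function.Injective g := by
    refine (injective_iff_map_eq_zero g).2 fun q hq => Subtype.ext ?_
    exact eq_zero_of_eqOn_zero_of_isOpen isOpen_interior hS'
      (ContinuousMap.eqOn_interior_of_toL2On_eq_zero volume hS hq)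
  obtain ⟨C, hC, hfg⟩ := f.exists_norm_le_mul_norm_of_injective hg
  refine ⟨C, hC, fun q hq x hx => ?_⟩
  let q' : restrictTotalDegree (Fin d) ℝ l := ⟨q, (mem_restrictTotalDegree _ _ _).2 hq⟩
  have hqf : ‖f q'‖ ≤ C * ‖(P q').toL2On volume hS‖ := hfg q'
  rw [ContinuousMap.norm_toL2On] at hqf
  exact ((f _).norm_coe_le_norm ⟨x, hx⟩).trans hqf

end MvPolynomial

/-- L∞-on-unit-ball vs L²-on-inscribed-ball norm equivalence for
polynomials of bounded degree, uniform over inscribed balls of radius ≥ 1/ρ. -/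
theorem stmt0 (d l : ℕ) (ρ : ℝ) (hρ : 1 < ρ) :
    ∃ C > (0 : ℝ), ∀ q : MvPolynomial (Fin d) ℝ, q.totalDegree ≤ l →
      ∀ (c : EuclideanSpace ℝ (Fin d)) (r : ℝ), (1 : ℝ)/ρ ≤ r →
        Metric.closedBall c r ⊆ Metric.closedBall (0 : EuclideanSpace ℝ (Fin d)) 1 →
        ∀ x ∈ Metric.closedBall (0 : EuclideanSpace ℝ (Fin d)) 1,
          |MvPolynomial.eval (fun i => x i) q| ≤
            C * (∫ y in Metric.closedBall c r,
              (MvPolynomial.eval (fun i => y i) q) ^ 2) ^ ((1 : ℝ)/2) := by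
  have hρ₀ : 0 < ρ := zero_lt_one.trans hρ
  set δ := 1 / (2 * ρ)
  have hδ : 0 < δ := by positivity
  obtain ⟨t, ht, htcover⟩ := totallyBounded_iff.1
    (isCompact_closedBall (0 : EuclideanSpace ℝ (Fin d)) 1).totallyBounded δ hδ
  choose C _ hC using fun c₀ : EuclideanSpace ℝ (Fin d) =>
    exists_abs_eval_le_mul_integral_sq l (isCompact_closedBall 0 1) (isCompact_closedBall c₀ δ)
      (by simpa using (nonempty_ball.2 hδ).mono ball_subset_interior_closedBall)
  obtain ⟨M, hM⟩ := (ht.image C).bddAbove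
  refine ⟨max M 1, by positivity, fun q hq c r hr hsub x hx => ?_⟩
  obtain ⟨c₀, hc₀, hcc₀⟩ := Set.mem_iUnion₂.1 <|
    htcover (hsub (mem_closedBall_self ((one_div_pos.2 hρ₀).le.trans hr)))
  have hball : closedBall c₀ δ ⊆ closedBall c r := closedBall_subset_closedBall' <| by
    rw [dist_comm]
    have hδδ : δ + δ = 1 / ρ := by simp only [δ]; field_simp; ring
    linarith [mem_ball.1 hcc₀]
  calc |eval (fun i => x i) q|
      ≤ C c₀ * (∫ y in closedBall c₀ δ, eval (fun i => y i) q ^ 2) ^ (1 / 2 : ℝ) :=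
        hC c₀ q hq x hx
    _ ≤ max M 1 * (∫ y in closedBall c r, eval (fun i => y i) q ^ 2) ^ (1 / 2 : ℝ) := by
        gcongr ?_ * ?_ ^ _
        · exact (hM ⟨c₀, hc₀, rfl⟩).trans (le_max_left _ _)
        · exact setIntegral_mono_set
            (((toContinuousMapEuclidean q).continuous.pow 2).continuousOn.integrableOn_compact
              (isCompact_closedBall c r))
            (.of_forall fun _ => sq_nonneg _) hball.eventuallyLE
end

section
/- Let B ⊂ ℝ^d be an open ball, let A ∈ ℝ^{d×d} be a constant symmetric positive definite matrix, let χ(x) = |x − x₀|² − r² be the quadratic polynomial vanishing on ∂B (x₀ the center, r the radius), and fix k ≥ 2. Then the linear map Q : ℙ_{k−2} → ℙ_{k−2} defined by Q(v) = −∑_{i,j} A_{ij} ∂_i∂_j (χ v) is a bijection of the space of polynomials of degree at most k−2. -/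
/-!
Since `Q` maps the finite-dimensional space of polynomials of degree `≤ k - 2` into itself, it
suffices that `Q` is injective. Write `L_M = ∑ M i j ∂ᵢ ∂ⱼ` and `q_M = xᵀ M x`. If `Q v = 0` with
`v ≠ 0` of degree `m`, the degree-`m` component of `Q v` is `L_A (|x|² u)` for the top homogeneous
component `u` of `v`, so it is enough to show that `L_A (|x|² u) = 0` forces `u = 0`.

For the apolar pairing `⟪p, q⟫ = ∑ α! p_α q_α`, multiplication by `X i` is adjoint to `∂ᵢ`, hence
multiplication by `q_M` is adjoint to `L_M`, and `L_M (q_M w) = 0` gives `⟪q_M w, q_M w⟫ = 0`, so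
`w = 0`. To bring `L_A (|x|² u)` into this shape, substitute `x ↦ S x` with `S = A^{1/4}`: this
turns `|x|²` into `q_M` and `L_A` into `L_M` for the same matrix `M = A^{1/2}`.
-/

open MvPolynomial Finset
open scoped Matrix

namespace MvPolynomial

variable {σ R : Type*}

section CommSemiring

variable [CommSemiring R]

theorem totalDegree_pderiv_le (i : σ) (p : MvPolynomial σ R) :
    (pderiv i p).totalDegree ≤ p.totalDegree - 1 := by
  refine Finset.sup_le fun α hα => ?_
  have hcoeff : α + Finsupp.single i 1 ∈ p.support := by
    rw [mem_support_iff, coeff_pderiv] at hα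
    exact mem_support_iff.mpr (left_ne_zero_of_mul hα)
  have := le_totalDegree hcoeff
  change (α + Finsupp.single i 1).degree ≤ _ at this
  change α.degree ≤ _
  rw [map_add, Finsupp.degree_single] at this
  omega

theorem homogeneousComponent_pderiv (n : ℕ) (i : σ) (p : MvPolynomial σ R) :
    homogeneousComponent n (pderiv i p) = pderiv i (homogeneousComponent (n + 1) p) := by
  ext α
  simp only [coeff_homogeneousComponent, coeff_pderiv, map_add, Finsupp.degree_single,
    add_left_inj]
  split_ifs <;> simp

theorem homogeneousComponent_totalDegree_ne_zero {p : MvPolynomial σ R} (hp : p ≠ 0) :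
    homogeneousComponent p.totalDegree p ≠ 0 := by
  obtain ⟨α, hα, hdeg⟩ := exists_mem_eq_sup _ (support_nonempty.mpr hp) fun s => s.degree
  intro h
  have := congrArg (coeff α) h
  rw [coeff_homogeneousComponent, if_pos (show α.degree = p.totalDegree from hdeg.symm),
    coeff_zero] at this
  exact mem_support_iff.mp hα this

theorem homogeneousComponent_mul_of_totalDegree_le {p q : MvPolynomial σ R} {a b : ℕ}
    (hp : p.totalDegree ≤ a) (hq : q.totalDegree ≤ b) :
    homogeneousComponent (a + b) (p * q) = homogeneousComponent a p * homogeneousComponent b q := by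
  classical
  ext γ
  rw [coeff_homogeneousComponent, coeff_mul, coeff_mul]
  split_ifs with hγ
  · refine sum_congr rfl fun x hx => ?_
    have hsum : x.1.degree + x.2.degree = a + b := by
      rw [← map_add, mem_antidiagonal.mp hx, hγ]
    simp only [coeff_homogeneousComponent]
    rcases lt_trichotomy x.1.degree a with h | h | h
    · rw [coeff_eq_zero_of_totalDegree_lt (show q.totalDegree < x.2.degree by omega)]
      simp
    · simp [h, show x.2.degree = b by omega]
    · rw [coeff_eq_zero_of_totalDegree_lt (show p.totalDegree < x.1.degree by omega)]
      simp [h.ne']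
  · refine (sum_eq_zero fun x hx => ?_).symm
    simp only [coeff_homogeneousComponent]
    split_ifs with h1 h2
    · exact absurd (by rw [← mem_antidiagonal.mp hx, map_add, h1, h2]) hγ
    all_goals simp

theorem pderiv_aeval {τ : Type*} [Fintype τ] (f : τ → MvPolynomial σ R) (k : σ)
    (p : MvPolynomial τ R) :
    pderiv k (aeval f p) = ∑ i, aeval f (pderiv i p) * pderiv k (f i) := by
  classical
  induction p using MvPolynomial.induction_on with
  | C a => simp
  | add p q hp hq => simp only [map_add, hp, hq, add_mul, sum_add_distrib]
  | mul_X p j hp =>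
    have hX (i : τ) : aeval f (p * pderiv i (X j)) * pderiv k (f i)
        = if j = i then aeval f p * pderiv k (f j) else 0 := by
      by_cases h : j = i
      · subst h; simp
      · simp [h]
    rw [map_mul, aeval_X, pderiv_mul, hp, sum_mul]
    simp only [pderiv_mul, map_add, add_mul, sum_add_distrib, hX, sum_ite_eq, mem_univ, if_true]
    congr 1
    exact sum_congr rfl fun i _ => by rw [map_mul, aeval_X, mul_right_comm]

variable [Fintype σ]

def factorialProd (α : σ →₀ ℕ) : ℕ := ∏ i, (α i).factorial

theorem factorialProd_add_single [DecidableEq σ] (α : σ →₀ ℕ) (i : σ) :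
    factorialProd (α + Finsupp.single i 1) = (α i + 1) * factorialProd α := by
  simp only [factorialProd, ← mul_prod_erase univ _ (mem_univ i)]
  rw [prod_congr rfl fun j hj => by
    rw [Finsupp.add_apply, Finsupp.single_eq_of_ne (ne_of_mem_erase hj), add_zero]]
  simp [Nat.factorial_succ, mul_assoc]

-- Built with `Finsupp.lsum` so that bilinearity is free; `apolar_apply` gives `∑ α! p_α q_α`.
noncomputable def apolar : MvPolynomial σ R →ₗ[R] MvPolynomial σ R →ₗ[R] R :=
  Finsupp.lsum R
      (fun α : σ →₀ ℕ => LinearMap.toSpanSingleton R _ ((factorialProd α : R) • lcoeff R α))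
    ∘ₗ (AddMonoidAlgebra.coeffLinearEquiv R).toLinearMap

theorem apolar_apply (p q : MvPolynomial σ R) :
    apolar p q = ∑ α ∈ p.support, coeff α p * factorialProd α * coeff α q := by
  simp [apolar, sum_def, mul_comm, mul_left_comm]

theorem apolar_monomial (s : σ →₀ ℕ) (a : R) (q : MvPolynomial σ R) :
    apolar (monomial s a) q = a * factorialProd s * coeff s q := by
  simp [apolar, mul_comm, mul_left_comm]

theorem apolar_X_mul (i : σ) (p q : MvPolynomial σ R) :
    apolar (X i * p) q = apolar p (pderiv i q) := by
  classical
  induction p using MvPolynomial.induction_on' with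
  | add p p' hp hp' =>
    rw [mul_add, map_add, map_add, LinearMap.add_apply, LinearMap.add_apply, hp, hp']
  | monomial s a =>
    rw [X, monomial_mul, one_mul, apolar_monomial, apolar_monomial, coeff_pderiv, add_comm _ s,
      factorialProd_add_single]
    push_cast
    ring

noncomputable def secondOrderOp (M : Matrix σ σ R) : MvPolynomial σ R →ₗ[R] MvPolynomial σ R :=
  ∑ i, ∑ j, M i j • ((pderiv i).toLinearMap ∘ₗ (pderiv j).toLinearMap)

theorem secondOrderOp_apply (M : Matrix σ σ R) (p : MvPolynomial σ R) :
    secondOrderOp M p = ∑ i, ∑ j, C (M i j) * pderiv i (pderiv j p) := by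
  simp [secondOrderOp, LinearMap.sum_apply, smul_eq_C_mul]

theorem totalDegree_secondOrderOp_le (M : Matrix σ σ R) (p : MvPolynomial σ R) :
    (secondOrderOp M p).totalDegree ≤ p.totalDegree - 2 := by
  rw [secondOrderOp_apply]
  refine totalDegree_finsetSum_le fun i _ => totalDegree_finsetSum_le fun j _ => ?_
  refine (totalDegree_mul _ _).trans ?_
  have := (totalDegree_pderiv_le i _).trans (Nat.sub_le_sub_right (totalDegree_pderiv_le j p) 1)
  rw [totalDegree_C]
  omega

theorem homogeneousComponent_secondOrderOp (M : Matrix σ σ R) (n : ℕ) (p : MvPolynomial σ R) :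
    homogeneousComponent n (secondOrderOp M p)
      = secondOrderOp M (homogeneousComponent (n + 2) p) := by
  simp only [secondOrderOp_apply, map_sum, homogeneousComponent_C_mul, homogeneousComponent_pderiv]

noncomputable def quadForm (M : Matrix σ σ R) : MvPolynomial σ R :=
  ∑ i, ∑ j, C (M i j) * (X i * X j)

theorem apolar_quadForm_mul (B : Matrix σ σ R) (w z : MvPolynomial σ R) :
    apolar (quadForm B * w) z = apolar w (secondOrderOp B z) := by
  have term (i j : σ) : apolar (C (B i j) * (X i * X j) * w) z
      = B i j • apolar w (pderiv i (pderiv j z)) := by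
    rw [show C (B i j) * (X i * X j) * w = B i j • (X j * (X i * w)) by rw [smul_eq_C_mul]; ring,
      map_smul, LinearMap.smul_apply, apolar_X_mul, apolar_X_mul]
  simp only [quadForm, secondOrderOp, sum_mul, map_sum, LinearMap.sum_apply, term,
    LinearMap.smul_apply, LinearMap.comp_apply, map_smul, Derivation.coeFn_coe]

noncomputable def linearSubst (S : Matrix σ σ R) : MvPolynomial σ R →ₐ[R] MvPolynomial σ R :=
  aeval fun i => ∑ j, C (S i j) * X j

theorem linearSubst_C (S : Matrix σ σ R) (c : R) : linearSubst S (C c) = C c :=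
  aeval_C _ c

theorem linearSubst_X (S : Matrix σ σ R) (i : σ) : linearSubst S (X i) = ∑ j, C (S i j) * X j :=
  aeval_X _ i

theorem pderiv_linearSubst (S : Matrix σ σ R) (k : σ) (p : MvPolynomial σ R) :
    pderiv k (linearSubst S p) = ∑ i, C (S i k) * linearSubst S (pderiv i p) := by
  classical
  rw [linearSubst, pderiv_aeval]
  simp [pderiv_X, Pi.single_apply, mul_comm]

theorem pderiv_pderiv_linearSubst (S : Matrix σ σ R) (k l : σ) (p : MvPolynomial σ R) :
    pderiv k (pderiv l (linearSubst S p))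
      = ∑ a, ∑ b, C (S a k * S b l) * linearSubst S (pderiv a (pderiv b p)) := by
  simp only [pderiv_linearSubst, map_sum, pderiv_C_mul, mul_sum]
  rw [sum_comm]
  exact sum_congr rfl fun a _ => sum_congr rfl fun b _ => by rw [map_mul]; ring

theorem secondOrderOp_linearSubst (M S : Matrix σ σ R) (p : MvPolynomial σ R) :
    secondOrderOp M (linearSubst S p) = linearSubst S (secondOrderOp (S * M * Sᵀ) p) := by
  simp only [secondOrderOp_apply, pderiv_pderiv_linearSubst, map_sum, map_mul, linearSubst_C,
    Matrix.mul_apply, Matrix.transpose_apply, mul_sum, sum_mul, ← Fintype.sum_prod_type']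
  exact Fintype.sum_equiv
    ⟨fun ⟨k, l, a, b⟩ => (a, b, l, k), fun ⟨a, b, l, k⟩ => (k, l, a, b), fun _ => rfl, fun _ => rfl⟩
    _ _ fun _ => by simp only [Equiv.coe_fn_mk]; ring

theorem linearSubst_sum_X_sq (S : Matrix σ σ R) :
    linearSubst S (∑ i, X i ^ 2) = quadForm (Sᵀ * S) := by
  simp only [map_sum, linearSubst_X, sq, quadForm, Matrix.mul_apply, Matrix.transpose_apply,
    map_mul, sum_mul, mul_sum]
  rw [sum_comm]
  refine sum_congr rfl fun j _ => ?_
  rw [sum_comm]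
  exact sum_congr rfl fun k _ => sum_congr rfl fun i _ => by ring

theorem linearSubst_linearSubst (S T : Matrix σ σ R) (p : MvPolynomial σ R) :
    linearSubst S (linearSubst T p) = linearSubst (T * S) p := by
  rw [← AlgHom.comp_apply]
  congr 1
  refine algHom_ext fun i => ?_
  simp only [AlgHom.comp_apply, linearSubst_X, map_sum, map_mul, linearSubst_C, mul_sum,
    Matrix.mul_apply, sum_mul]
  rw [sum_comm]
  exact sum_congr rfl fun k _ => sum_congr rfl fun j _ => by ring

theorem linearSubst_one [DecidableEq σ] : linearSubst (1 : Matrix σ σ R) = AlgHom.id R _ :=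
  algHom_ext fun i => by simp [linearSubst_X, Matrix.one_apply]

end CommSemiring

section CommRing

variable [CommRing R] [Fintype σ]

theorem linearSubst_injective [DecidableEq σ] {S : Matrix σ σ R}
    (hS : IsUnit S) : Function.Injective (linearSubst S) :=
  Function.LeftInverse.injective (g := linearSubst S⁻¹) fun p => by
    rw [linearSubst_linearSubst, Matrix.mul_nonsing_inv _ ((Matrix.isUnit_iff_isUnit_det S).mp hS),
      linearSubst_one, AlgHom.id_apply]

theorem totalDegree_sum_sub_sq_sub_C_le (c : σ → R) (a : R) :
    ((∑ i, (X i - C (c i)) ^ 2) - C a).totalDegree ≤ 2 := by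
  refine (totalDegree_sub _ _).trans (max_le ?_ (by rw [totalDegree_C]; omega))
  refine totalDegree_finsetSum_le fun i _ => (totalDegree_pow _ 2).trans ?_
  have : (X i - C (c i) : MvPolynomial σ R).totalDegree ≤ 1 :=
    (totalDegree_sub _ _).trans
      (max_le (isHomogeneous_X R i).totalDegree_le (by rw [totalDegree_C]; omega))
  omega

theorem homogeneousComponent_two_sum_sub_sq_sub_C (c : σ → R) (a : R) :
    homogeneousComponent 2 ((∑ i, (X i - C (c i)) ^ 2) - C a) = ∑ i, X i ^ 2 := by
  have hC (b : R) : homogeneousComponent 2 (C b : MvPolynomial σ R) = 0 := by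
    simp [homogeneousComponent_of_mem (isHomogeneous_C σ b)]
  have hsq (i : σ) : (X i - C (c i)) ^ 2 = X i ^ 2 - C (2 * c i) * X i + C (c i ^ 2) := by
    simp only [map_mul, map_pow, map_ofNat]; ring
  simp only [hsq, map_sum, map_sub, map_add, homogeneousComponent_C_mul, hC,
    homogeneousComponent_of_mem (isHomogeneous_X R _),
    homogeneousComponent_eq_self (isHomogeneous_X_pow _ 2)]
  simp

end CommRing

section StrictOrderedRing

variable [CommRing R] [LinearOrder R] [IsStrictOrderedRing R] [Fintype σ]

theorem apolar_self_pos {p : MvPolynomial σ R} (hp : p ≠ 0) : 0 < apolar p p := by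
  rw [apolar_apply]
  refine sum_pos (fun α hα => ?_) (support_nonempty.mpr hp)
  have hfac : (0 : R) < factorialProd α := mod_cast prod_pos fun i _ => Nat.factorial_pos _
  rw [mul_right_comm]
  exact mul_pos (mul_self_pos.mpr (mem_support_iff.mp hα)) hfac

theorem eq_zero_of_secondOrderOp_quadForm_mul_eq_zero {B : Matrix σ σ R} (hB : quadForm B ≠ 0)
    {w : MvPolynomial σ R}
    (h : secondOrderOp B (quadForm B * w) = 0) : w = 0 := by
  by_contra hw
  have hpos := apolar_self_pos (mul_ne_zero hB hw)
  rw [apolar_quadForm_mul, h, map_zero] at hpos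
  exact lt_irrefl _ hpos

end StrictOrderedRing

end MvPolynomial

open scoped MatrixOrder in
theorem Matrix.PosDef.exists_posDef_fourthRoot {n : Type*} [Fintype n] [DecidableEq n]
    {A : Matrix n n ℝ} (hA : A.PosDef) :
    ∃ S : Matrix n n ℝ, S.PosDef ∧ (S * S).PosDef ∧ S * S * (S * S) = A := by
  have hsqrt : IsStrictlyPositive (CFC.sqrt A) := hA.isStrictlyPositive.sqrt
  refine ⟨CFC.sqrt (CFC.sqrt A), isStrictlyPositive_iff_posDef.mp hsqrt.sqrt, ?_, ?_⟩
  · rw [CFC.sqrt_mul_sqrt_self _ hsqrt.nonneg]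
    exact isStrictlyPositive_iff_posDef.mp hsqrt
  · rw [CFC.sqrt_mul_sqrt_self _ hsqrt.nonneg,
      CFC.sqrt_mul_sqrt_self _ hA.isStrictlyPositive.nonneg]

namespace MvPolynomial

variable {σ : Type*} [Fintype σ] [Nonempty σ]

theorem quadForm_ne_zero {B : Matrix σ σ ℝ} (hB : B.PosDef) : quadForm B ≠ 0 := by
  intro h
  have hone : (fun _ => 1 : σ → ℝ) ≠ 0 := fun h1 =>
    one_ne_zero (congrFun h1 (Classical.arbitrary σ))
  have := hB.dotProduct_mulVec_pos hone
  have heval : eval (fun _ => 1) (quadForm B) = star (fun _ => 1 : σ → ℝ) ⬝ᵥ B *ᵥ fun _ => 1 := by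
    simp [quadForm, dotProduct, Matrix.mulVec, Finset.mul_sum]
  rw [h, map_zero] at heval
  exact this.ne heval

theorem eq_zero_of_secondOrderOp_sum_X_sq_mul_eq_zero {A : Matrix σ σ ℝ}
    (hA : A.PosDef) {u : MvPolynomial σ ℝ} (h : secondOrderOp A ((∑ i, X i ^ 2) * u) = 0) :
    u = 0 := by
  classical
  obtain ⟨S, hS, hSS, hSA⟩ := hA.exists_posDef_fourthRoot
  have hST : Sᵀ = S := by
    rw [← Matrix.conjTranspose_eq_transpose_of_trivial]
    exact hS.isHermitian
  refine linearSubst_injective hS.isUnit ?_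
  rw [map_zero]
  refine eq_zero_of_secondOrderOp_quadForm_mul_eq_zero (quadForm_ne_zero hSS) ?_
  calc secondOrderOp (S * S) (quadForm (S * S) * linearSubst S u)
      = secondOrderOp (S * S) (linearSubst S ((∑ i, X i ^ 2) * u)) := by
        rw [map_mul (linearSubst S), linearSubst_sum_X_sq, hST]
    _ = 0 := by
        have hA' : S * (S * S) * Sᵀ = A := by rw [hST, ← hSA]; simp only [Matrix.mul_assoc]
        rw [secondOrderOp_linearSubst, hA', h, map_zero]

theorem eq_zero_of_secondOrderOp_mul_eq_zero {A : Matrix σ σ ℝ} (hA : A.PosDef)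
    {φ : MvPolynomial σ ℝ} (hφ : φ.totalDegree ≤ 2)
    (hφ₂ : homogeneousComponent 2 φ = ∑ i, X i ^ 2) {v : MvPolynomial σ ℝ}
    (h : secondOrderOp A (φ * v) = 0) : v = 0 := by
  by_contra hv
  apply homogeneousComponent_totalDegree_ne_zero hv
  apply eq_zero_of_secondOrderOp_sum_X_sq_mul_eq_zero hA
  rw [← hφ₂, ← homogeneousComponent_mul_of_totalDegree_le hφ le_rfl, add_comm,
    ← homogeneousComponent_secondOrderOp, h, map_zero]

theorem existsUnique_neg_secondOrderOp_mul_eq {A : Matrix σ σ ℝ} (hA : A.PosDef)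
    {φ : MvPolynomial σ ℝ} (hφ : φ.totalDegree ≤ 2)
    (hφ₂ : homogeneousComponent 2 φ = ∑ i, X i ^ 2) (n : ℕ) {q : MvPolynomial σ ℝ}
    (hq : q.totalDegree ≤ n) :
    ∃! v : MvPolynomial σ ℝ, v.totalDegree ≤ n ∧ -secondOrderOp A (φ * v) = q := by
  let Q := -(secondOrderOp A ∘ₗ LinearMap.mulLeft ℝ φ)
  have hQ_inj : Function.Injective Q := (injective_iff_map_eq_zero Q).mpr fun v hv =>
    eq_zero_of_secondOrderOp_mul_eq_zero hA hφ hφ₂ (neg_eq_zero.mp hv)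
  have hQ_maps : ∀ v ∈ restrictTotalDegree σ ℝ n, Q v ∈ restrictTotalDegree σ ℝ n := by
    intro v hv
    rw [mem_restrictTotalDegree] at hv ⊢
    change (-secondOrderOp A (φ * v)).totalDegree ≤ n
    refine (totalDegree_neg _).trans_le ((totalDegree_secondOrderOp_le A _).trans ?_)
    have := totalDegree_mul φ v
    omega
  obtain ⟨v, hv, hQv⟩ := (LinearMap.injOn_iff_surjOn hQ_maps).mp hQ_inj.injOn
    ((mem_restrictTotalDegree _ _ _).mpr hq)
  exact ⟨v, ⟨(mem_restrictTotalDegree _ _ _).mp hv, hQv⟩,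
    fun w hw => hQ_inj (hw.2.trans hQv.symm)⟩

end MvPolynomial

open MvPolynomial

theorem stmt4_general (d k : ℕ) (hd : 0 < d)
    (A : Matrix (Fin d) (Fin d) ℝ) (hA : A.PosDef)
    (x₀ : Fin d → ℝ) (r : ℝ) :
    ∀ q : MvPolynomial (Fin d) ℝ, q.totalDegree ≤ k - 2 →
      ∃! v : MvPolynomial (Fin d) ℝ, v.totalDegree ≤ k - 2 ∧
        -(∑ i, ∑ j, MvPolynomial.C (A i j) *
            MvPolynomial.pderiv i (MvPolynomial.pderiv j
              (((∑ i, (MvPolynomial.X i - MvPolynomial.C (x₀ i)) ^ 2)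
                  - MvPolynomial.C (r ^ 2)) * v))) = q := by
  intro q hq
  have : Nonempty (Fin d) := ⟨⟨0, hd⟩⟩
  simpa only [secondOrderOp_apply] using existsUnique_neg_secondOrderOp_mul_eq hA
    (totalDegree_sum_sub_sq_sub_C_le x₀ (r ^ 2)) (homogeneousComponent_two_sum_sub_sq_sub_C x₀ _)
    (k - 2) hq

/-- for a constant symmetric positive definite matrix A and
χ(x) = |x-x₀|² - r² (vanishing on the sphere ∂B), the map
Q(v) = -∑_{i,j} A_{ij} ∂_i∂_j (χ v) is a bijection of ℙ_{k-2}, expressed as: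
for each q of degree ≤ k-2 there is a unique v of degree ≤ k-2 with Q(v) = q. -/
theorem stmt4 (d k : ℕ) (hd : 0 < d) (hk : 2 ≤ k)
    (A : Matrix (Fin d) (Fin d) ℝ) (hA : A.PosDef)
    (x₀ : Fin d → ℝ) (r : ℝ) (hr : 0 < r) :
    ∀ q : MvPolynomial (Fin d) ℝ, q.totalDegree ≤ k - 2 →
      ∃! v : MvPolynomial (Fin d) ℝ, v.totalDegree ≤ k - 2 ∧
        -(∑ i, ∑ j, MvPolynomial.C (A i j) *
            MvPolynomial.pderiv i (MvPolynomial.pderiv j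
              (((∑ i, (MvPolynomial.X i - MvPolynomial.C (x₀ i)) ^ 2)
                  - MvPolynomial.C (r ^ 2)) * v))) = q :=
  stmt4_general d k hd A hA x₀ r
end

section
/- Let V, M be finite-dimensional inner product spaces, a : V × V → ℝ a symmetric coercive bounded bilinear form, b : M × V → ℝ bounded with inf-sup constant δ > 0, V' the kernel of b in V. Suppose u_loc ∈ V satisfies b(q, u_loc) = G(q) for all q ∈ M, and u' ∈ V' satisfies a(u', v') = L(v') − a(u_loc, v') for all v' ∈ V'. Then u := u_loc + u' equals the first component of the unique solution (u_h, p_h) of the saddle point problem a(u_h, v) + b(p_h, v) = L(v) for all v ∈ V, b(q, u_h) = G(q) for all q ∈ M. In particular, u is independent of the choice of u_loc solving the local problem. -/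
/-- the static condensation scheme (local solve b(q,u_loc)=G(q),
global solve on the kernel V' of b) produces exactly the first component of
the unique saddle point solution; in particular u_loc + u' is independent of
the choice of u_loc. -/
theorem stmt9 {V M : Type*}
    [NormedAddCommGroup V] [InnerProductSpace ℝ V] [FiniteDimensional ℝ V]
    [NormedAddCommGroup M] [InnerProductSpace ℝ M] [FiniteDimensional ℝ M]
    (a : V →ₗ[ℝ] V →ₗ[ℝ] ℝ) (b : M →ₗ[ℝ] V →ₗ[ℝ] ℝ)
    (c Ca Cb δ : ℝ) (hc : 0 < c) (hδ : 0 < δ)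
    (hsym : ∀ u v : V, a u v = a v u)
    (hcoer : ∀ v : V, c * ‖v‖ ^ 2 ≤ a v v)
    (habd : ∀ u v : V, |a u v| ≤ Ca * ‖u‖ * ‖v‖)
    (hbbd : ∀ (q : M) (v : V), |b q v| ≤ Cb * ‖q‖ * ‖v‖)
    (hinfsup : ∀ q : M, q ≠ 0 → ∃ v : V, v ≠ 0 ∧ δ * ‖q‖ * ‖v‖ ≤ b q v)
    (L : V →ₗ[ℝ] ℝ) (G : M →ₗ[ℝ] ℝ)
    (uloc u' : V)
    (huloc : ∀ q : M, b q uloc = G q)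
    (hu'ker : ∀ q : M, b q u' = 0)
    (hu' : ∀ v' : V, (∀ q : M, b q v' = 0) → a u' v' = L v' - a uloc v')
    (uh : V) (ph : M)
    (hsaddle1 : ∀ v : V, a uh v + b ph v = L v)
    (hsaddle2 : ∀ q : M, b q uh = G q) :
    uloc + u' = uh := by
  set w := uloc + u' - uh with hw
  have hwker : ∀ q : M, b q w = 0 := by
    intro q
    simp [hw, huloc q, hu'ker q, hsaddle2 q]
  have haww : a w w = 0 := by
    have h1 : a u' w = L w - a uloc w := hu' w hwker
    have h2 : a uh w = L w := by
      have := hsaddle1 w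
      rw [hwker ph] at this
      linarith
    have : a w w = a uloc w + a u' w - a uh w := by
      simp [hw]
    rw [this, h1, h2]; ring
  have hn : ‖w‖ = 0 := by
    have h := hcoer w
    rw [haww] at h
    by_contra hne
    have hpos : 0 < ‖w‖ := lt_of_le_of_ne (norm_nonneg w) (Ne.symm hne)
    nlinarith [mul_pos hc (pow_pos hpos 2)]
  have hz : w = 0 := norm_eq_zero.mp hn
  rw [hw] at hz
  exact sub_eq_zero.mp hz
end

section
/- Let V, M be finite-dimensional inner product spaces, a : V×V → ℝ coercive (constant c) and bounded (constant C_a) and b : M×V → ℝ bounded (constant C_b) with inf-sup constant δ > 0. Let (u, p) ∈ V×M and (u_h, p_h) ∈ V×M be two solutions of saddle point problems with the same right-hand sides, i.e. a(u − u_h, v) + b(p − p_h, v) = 0 for all v ∈ V and b(q, u − u_h) = 0 for all q ∈ M (Galerkin orthogonality). Then for any w ∈ V: ⫼u_h − w⫼ + ‖p_h − p‖ ≤ C · sup_{(v,q): ⫼v⫼+‖q‖=1} ( a(u − w, v) + b(q, u − w) ), where C = C(c, C_a, C_b, δ). -/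
/-- abstract quasi-optimality for saddle point approximations
(Ern–Guermond Prop. 2.36): with a coercive/bounded, b bounded with inf-sup
constant δ, and Galerkin orthogonality between (u,p) and (u_h,p_h), for any
comparison element w the error ‖u_h − w‖ + ‖p_h − p‖ is bounded by C times the
sup over unit-norm pairs (v,q) (‖v‖ + ‖q‖ = 1) of a(u − w, v) + b(q, u − w);
the sup is encoded as: any upper bound S of these quantities works. -/
theorem stmt17 {V M : Type*}
    [NormedAddCommGroup V] [InnerProductSpace ℝ V] [FiniteDimensional ℝ V]
    [Nontrivial V]
    [NormedAddCommGroup M] [InnerProductSpace ℝ M] [FiniteDimensional ℝ M]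
    (c Ca Cb δ : ℝ) (hc : 0 < c) (hδ : 0 < δ) :
    ∃ C > (0 : ℝ),
      ∀ (a : V →ₗ[ℝ] V →ₗ[ℝ] ℝ) (b : M →ₗ[ℝ] V →ₗ[ℝ] ℝ),
        (∀ v : V, c * ‖v‖ ^ 2 ≤ a v v) →
        (∀ u v : V, |a u v| ≤ Ca * ‖u‖ * ‖v‖) →
        (∀ (q : M) (v : V), |b q v| ≤ Cb * ‖q‖ * ‖v‖) →
        (∀ q : M, q ≠ 0 → ∃ v : V, v ≠ 0 ∧ δ * ‖q‖ * ‖v‖ ≤ b q v) →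
      ∀ (u uh : V) (p ph : M),
        (∀ v : V, a (u - uh) v + b (p - ph) v = 0) →
        (∀ q : M, b q (u - uh) = 0) →
      ∀ w : V, ∀ S : ℝ,
        (∀ (v : V) (q : M), ‖v‖ + ‖q‖ = 1 → a (u - w) v + b q (u - w) ≤ S) →
        ‖uh - w‖ + ‖ph - p‖ ≤ C * S := by
  obtain ⟨A, hAdef⟩ : ∃ A : ℝ, A = 1 + |Ca| / δ := ⟨_, rfl⟩
  have hA0 : 0 < A := by rw [hAdef]; positivity
  obtain ⟨s, hsdef⟩ : ∃ s : ℝ, s = Real.sqrt (c * δ) := ⟨_, rfl⟩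
  have hs0 : 0 < s := hsdef ▸ Real.sqrt_pos.2 (by positivity)
  have hs2 : s ^ 2 = c * δ := by rw [hsdef]; exact Real.sq_sqrt (by positivity)
  refine ⟨A * (A / c + 1 / s) + 1 / δ, by positivity, ?_⟩
  intro a b hcoer hCa hCb hinf u uh p ph h1 h2 w S hS
  -- key scaled bound
  have key : ∀ (v : V) (q : M), a (u - w) v + b q (u - w) ≤ S * (‖v‖ + ‖q‖) := by
    intro v q
    rcases eq_or_lt_of_le (by positivity : (0:ℝ) ≤ ‖v‖ + ‖q‖) with ht | ht
    · have hv : v = 0 := by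
        have := norm_eq_zero.1 (by nlinarith [norm_nonneg v, norm_nonneg q] : ‖v‖ = 0)
        exact this
      have hq : q = 0 := by
        have := norm_eq_zero.1 (by nlinarith [norm_nonneg v, norm_nonneg q] : ‖q‖ = 0)
        exact this
      simp [hv, hq]
    · set t : ℝ := ‖v‖ + ‖q‖
      have h := hS (t⁻¹ • v) (t⁻¹ • q) ?_
      · have hav : a (u - w) (t⁻¹ • v) = t⁻¹ * a (u - w) v := by
          simp [map_smul, smul_eq_mul]
        have hbq : b (t⁻¹ • q) (u - w) = t⁻¹ * b q (u - w) := by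
          simp [map_smul, LinearMap.smul_apply, smul_eq_mul]
        rw [hav, hbq] at h
        have := mul_le_mul_of_nonneg_left h (le_of_lt ht)
        calc a (u - w) v + b q (u - w)
            = t * (t⁻¹ * a (u - w) v + t⁻¹ * b q (u - w)) := by
              rw [mul_add, ← mul_assoc, ← mul_assoc, mul_inv_cancel₀ (ne_of_gt ht),
                one_mul, one_mul]
          _ ≤ t * S := this
          _ = S * t := by ring
      · rw [norm_smul, norm_smul]
        rw [Real.norm_eq_abs, abs_of_pos (inv_pos.2 ht)]
        field_simp
        rfl
  -- S nonneg
  obtain ⟨v0, hv0⟩ := exists_ne (0 : V)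
  have hv0n : (0:ℝ) < ‖v0‖ := norm_pos_iff.2 hv0
  have hSnn : 0 ≤ S := by
    have h1' := key v0 0
    have h2' := key (-v0) 0
    simp [map_neg] at h1' h2'
    nlinarith
  have hx0 : (0:ℝ) ≤ ‖uh - w‖ := norm_nonneg _
  have hR0 : (0:ℝ) ≤ ‖ph - p‖ := norm_nonneg _
  have hnpr : ‖p - ph‖ = ‖ph - p‖ := norm_sub_rev p ph
  -- Galerkin identity
  have hid : a (uh - w) (uh - w) = a (u - w) (uh - w) + b (p - ph) (u - w) := by
    have e1 := h1 (uh - w)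
    have e2 := h2 (p - ph)
    simp only [map_sub, LinearMap.sub_apply] at e1 e2 ⊢
    linarith
  -- step 1: c ‖uh-w‖² ≤ S (‖uh-w‖ + ‖ph-p‖)
  have step1 : c * ‖uh - w‖ ^ 2 ≤ S * (‖uh - w‖ + ‖ph - p‖) := by
    have hk := key (uh - w) (p - ph)
    rw [hnpr] at hk
    have hco := hcoer (uh - w)
    rw [hid] at hco
    linarith
  -- step 2: δ ‖ph-p‖ ≤ S + |Ca| ‖uh-w‖
  have step2 : δ * ‖ph - p‖ ≤ S + |Ca| * ‖uh - w‖ := by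
    by_cases hr : ph - p = 0
    · rw [hr, norm_zero, mul_zero]
      have : (0:ℝ) ≤ |Ca| * ‖uh - w‖ := by positivity
      linarith
    · obtain ⟨v1, hv1ne, hiv⟩ := hinf (ph - p) hr
      have hv1n : (0:ℝ) < ‖v1‖ := norm_pos_iff.2 hv1ne
      have e1 := h1 v1
      have hb1 : b (ph - p) v1 = a (u - uh) v1 := by
        simp only [map_sub, LinearMap.sub_apply] at e1 ⊢
        linarith
      have hsplit : a (u - uh) v1 = a (u - w) v1 + a (w - uh) v1 := by
        simp only [map_sub, LinearMap.sub_apply]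
        ring
      have hk := key v1 (0 : M)
      simp only [map_zero, LinearMap.zero_apply, norm_zero, add_zero] at hk
      have hbnd : a (w - uh) v1 ≤ |Ca| * ‖uh - w‖ * ‖v1‖ := by
        calc a (w - uh) v1 ≤ |a (w - uh) v1| := le_abs_self _
          _ ≤ Ca * ‖w - uh‖ * ‖v1‖ := hCa _ _
          _ ≤ |Ca| * ‖w - uh‖ * ‖v1‖ :=
              mul_le_mul_of_nonneg_right
                (mul_le_mul_of_nonneg_right (le_abs_self Ca) (norm_nonneg _))
                (norm_nonneg _)
          _ = |Ca| * ‖uh - w‖ * ‖v1‖ := by rw [norm_sub_rev w uh]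
      have hchain : δ * ‖ph - p‖ * ‖v1‖ ≤ (S + |Ca| * ‖uh - w‖) * ‖v1‖ := by
        have h5 : δ * ‖ph - p‖ * ‖v1‖ ≤ a (u - w) v1 + a (w - uh) v1 := by
          rw [← hsplit, ← hb1]; exact hiv
        have h6 : (S + |Ca| * ‖uh - w‖) * ‖v1‖
            = S * ‖v1‖ + |Ca| * ‖uh - w‖ * ‖v1‖ := by ring
        linarith
      exact le_of_mul_le_mul_right hchain hv1n
  -- combined quadratic: δ c x² ≤ δ A S x + S²
  have hAδ : δ * A = δ + |Ca| := by
    rw [hAdef]; field_simp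
  have hquad : δ * c * ‖uh - w‖ ^ 2 ≤ δ * A * S * ‖uh - w‖ + S ^ 2 := by
    have h1' : δ * (c * ‖uh - w‖ ^ 2) ≤ δ * (S * (‖uh - w‖ + ‖ph - p‖)) :=
      mul_le_mul_of_nonneg_left step1 hδ.le
    have h2' : S * (δ * ‖ph - p‖) ≤ S * (S + |Ca| * ‖uh - w‖) :=
      mul_le_mul_of_nonneg_left step2 hSnn
    have h3' : δ * A * S * ‖uh - w‖ = (δ + |Ca|) * S * ‖uh - w‖ := by rw [hAδ]
    nlinarith [h3']
  -- step 3: c s x ≤ A s S + c S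
  have step3 : c * s * ‖uh - w‖ ≤ A * s * S + c * S := by
    by_contra hcon
    push_neg at hcon
    have hpos : (0:ℝ) < c * s * ‖uh - w‖ + c * S := by
      have h7 : (0:ℝ) ≤ A * s * S + c * S := by positivity
      nlinarith
    have h8 := mul_lt_mul_of_pos_right hcon hpos
    have h9 := mul_le_mul_of_nonneg_left hquad (by positivity : (0:ℝ) ≤ c ^ 2)
    have h10 : A * c * S * ‖uh - w‖ * s ^ 2 = A * c * S * ‖uh - w‖ * (c * δ) := by
      rw [hs2]
    have h11 : c ^ 2 * s ^ 2 * ‖uh - w‖ ^ 2 = c ^ 2 * (c * δ) * ‖uh - w‖ ^ 2 := by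
      rw [hs2]
    have h12 : (0:ℝ) ≤ A * c * s * S ^ 2 := by positivity
    linarith [h8, h9, h10, h11, h12]
  -- conclude: δ (x + R) ≤ δ C S
  have hfinal : δ * (‖uh - w‖ + ‖ph - p‖)
      ≤ δ * ((A * (A / c + 1 / s) + 1 / δ) * S) := by
    have hxK : ‖uh - w‖ ≤ (A / c + 1 / s) * S := by
      rw [div_add_div _ _ (ne_of_gt hc) (ne_of_gt hs0), div_mul_eq_mul_div,
        le_div_iff₀ (by positivity)]
      calc ‖uh - w‖ * (c * s) = c * s * ‖uh - w‖ := by ring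
        _ ≤ A * s * S + c * S := step3
        _ = (A * s + c * 1) * S := by ring
    have h5 : δ * A * ‖uh - w‖ ≤ δ * A * ((A / c + 1 / s) * S) :=
      mul_le_mul_of_nonneg_left hxK (by positivity)
    have hexp : δ * ((A * (A / c + 1 / s) + 1 / δ) * S)
        = δ * A * ((A / c + 1 / s) * S) + S := by
      field_simp
    rw [hexp]
    have h7 : δ * A * ‖uh - w‖ = (δ + |Ca|) * ‖uh - w‖ := by rw [hAδ]
    linarith [h7, h5, step2]
  exact le_of_mul_le_mul_left hfinal hδ
end
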